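/- Let G be a graph such that for every edge e = uv of G, the set A(e) of vertices adjacent to neither u nor v induces a perfect subgraph of G. Then χ(G) ≤ (ω(G)³ − ω(G)² + 2·ω(G)) / 2. -/

import Mathlib

open SimpleGraph

/-- `G` contains no induced subgraph isomorphic to `H` (graph embeddings are
exactly the inclusions of induced subgraphs). -/
def IndFree {W V : Type*} (H : SimpleGraph W) (G : SimpleGraph V) : Prop :=
  IsEmpty (H ↪g G)

/-- A set of vertices is independent if its elements are pairwise nonadjacent. -/
def IsIndep {V : Type*} (G : SimpleGraph V) (s : Set V) : Prop :=
  s.Pairwise fun u v => ¬ G.Adj u v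

/-- A graph is perfect if every induced subgraph has chromatic number equal to
its clique number. -/
def IsPerfect {V : Type*} (G : SimpleGraph V) : Prop :=
  ∀ S : Set V, (G.induce S).chromaticNumber = ((G.induce S).cliqueNum : ℕ∞)

/-- `2K₂`: two disjoint edges `{0,1}` and `{2,3}`. -/
def graph2K2 : SimpleGraph (Fin 4) :=
  SimpleGraph.fromRel (fun a b => (a = 0 ∧ b = 1) ∨ (a = 2 ∧ b = 3))

/-- The path `P₄`. -/
def graphP4 : SimpleGraph (Fin 4) :=
  SimpleGraph.fromRel (fun a b => (a = 0 ∧ b = 1) ∨ (a = 1 ∧ b = 2) ∨ (a = 2 ∧ b = 3))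

/-- The path `P₃`. -/
def graphP3 : SimpleGraph (Fin 3) :=
  SimpleGraph.fromRel (fun a b => (a = 0 ∧ b = 1) ∨ (a = 1 ∧ b = 2))

/-- `P₄ ∪ K₁`: a path on `{0,1,2,3}` plus the isolated vertex `4`. -/
def graphP4K1 : SimpleGraph (Fin 5) :=
  SimpleGraph.fromRel (fun a b => (a = 0 ∧ b = 1) ∨ (a = 1 ∧ b = 2) ∨ (a = 2 ∧ b = 3))

/-- The cycle `C₄`. -/
def graphC4 : SimpleGraph (Fin 4) :=
  SimpleGraph.fromRel
    (fun a b => (a = 0 ∧ b = 1) ∨ (a = 1 ∧ b = 2) ∨ (a = 2 ∧ b = 3) ∨ (a = 3 ∧ b = 0))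

/-- The gem `K₁ + P₄`: a path on `{0,1,2,3}` plus the universal vertex `4`. -/
def graphGem : SimpleGraph (Fin 5) :=
  SimpleGraph.fromRel
    (fun a b => (a = 0 ∧ b = 1) ∨ (a = 1 ∧ b = 2) ∨ (a = 2 ∧ b = 3) ∨ (a ≠ 4 ∧ b = 4))

/-- The wheel `K₁ + C₄`: a 4-cycle on `{0,1,2,3}` plus the universal vertex `4`. -/
def graphWheel : SimpleGraph (Fin 5) :=
  SimpleGraph.fromRel
    (fun a b => (a = 0 ∧ b = 1) ∨ (a = 1 ∧ b = 2) ∨ (a = 2 ∧ b = 3) ∨ (a = 3 ∧ b = 0) ∨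
      (a ≠ 4 ∧ b = 4))

/-- `P₂ ∪ P₃`: the edge `{0,1}` together with the path `2 - 3 - 4`. -/
def graphP2P3 : SimpleGraph (Fin 5) :=
  SimpleGraph.fromRel (fun a b => (a = 0 ∧ b = 1) ∨ (a = 2 ∧ b = 3) ∨ (a = 3 ∧ b = 4))

/-- `P₂ ∪ P₄`: the edge `{0,1}` together with the path `2 - 3 - 4 - 5`. -/
def graphP2P4 : SimpleGraph (Fin 6) :=
  SimpleGraph.fromRel
    (fun a b => (a = 0 ∧ b = 1) ∨ (a = 2 ∧ b = 3) ∨ (a = 3 ∧ b = 4) ∨ (a = 4 ∧ b = 5))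

/-- `HVN`: `K₄` on `{0,1,2,3}` plus a vertex `4` adjacent to exactly `0` and `1`. -/
def graphHVN : SimpleGraph (Fin 5) :=
  SimpleGraph.fromRel (fun a b => (a < 4 ∧ b < 4) ∨ (a = 4 ∧ (b = 0 ∨ b = 1)))

/-- `K₅ - e`: the complete graph on 5 vertices minus the edge `{0,1}`. -/
def graphK5e : SimpleGraph (Fin 5) :=
  SimpleGraph.fromRel (fun a b => ¬((a = 0 ∧ b = 1) ∨ (a = 1 ∧ b = 0)))

/-- The diamond `K₄ - e`: the complete graph on 4 vertices minus the edge `{0,2}`. -/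
def graphDiamond : SimpleGraph (Fin 4) :=
  SimpleGraph.fromRel (fun a b => ¬((a = 0 ∧ b = 2) ∨ (a = 2 ∧ b = 0)))

/-- The paw: a triangle `{0,1,2}` plus a pendant vertex `3` adjacent to `0`. -/
def graphPaw : SimpleGraph (Fin 4) :=
  SimpleGraph.fromRel
    (fun a b => (a = 0 ∧ b = 1) ∨ (a = 1 ∧ b = 2) ∨ (a = 0 ∧ b = 2) ∨ (a = 0 ∧ b = 3))

/-- `K₅`. -/
def graphK5 : SimpleGraph (Fin 5) := ⊤

/-- The join `K₁ + H`: `H` together with a new universal vertex `none`. -/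
def joinK1 {W : Type*} (H : SimpleGraph W) : SimpleGraph (Option W) :=
  SimpleGraph.fromRel
    (fun a b => (∃ u v, a = some u ∧ b = some v ∧ H.Adj u v) ∨ a = none)

/-- A pseudo-split graph is a `(2K₂, C₄)`-free graph. -/
def IsPseudoSplit {V : Type*} (G : SimpleGraph V) : Prop :=
  IndFree graph2K2 G ∧ IndFree graphC4 G

/-! Fix a maximum clique `K`, of size `ω`. A vertex lying in no set `A(ab)` with `a b ∈ K` is
not complete to `K`, so it misses some `u ∈ K`, and then it is adjacent to every other vertex
of `K`. For each `u ∈ K` these vertices, together with `u`, form an independent set: two adjacent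
ones would extend `K \ {u}` to a clique of size `ω + 1`. The remaining vertices are covered by
the `ω.choose 2` perfect sets `A(ab)`, each `ω`-colourable, so `G` is
`(ω + ω.choose 2 * ω)`-colourable, and `ω + ω.choose 2 * ω = (ω³ - ω² + 2ω) / 2`. -/

theorem Nat.add_choose_two_mul_eq (n : ℕ) : n + n.choose 2 * n = (n ^ 3 - n ^ 2 + 2 * n) / 2 := by
  have h2 : n.choose 2 * 2 = n * (n - 1) := by
    rw [Nat.choose_two_right, Nat.div_mul_cancel n.even_mul_pred_self.two_dvd]
  have h3 : n ^ 3 - n ^ 2 = n * (n - 1) * n := by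
    cases n with
    | zero => rfl
    | succ m => exact Nat.sub_eq_of_eq_add (by rw [Nat.add_sub_cancel]; ring)
  rw [h3, ← h2, show n.choose 2 * 2 * n + 2 * n = 2 * (n + n.choose 2 * n) by ring,
    Nat.mul_div_cancel_left _ two_pos]

theorem IsPerfect.colorable_cliqueNum {V : Type*} [Finite V] {G : SimpleGraph V}
    (hG : IsPerfect G) : G.Colorable G.cliqueNum := by
  rw [← chromaticNumber_le_iff_colorable, ← chromaticNumber_congr G.induceUnivIso, hG Set.univ]
  exact_mod_cast G.cliqueNum_induce_le Set.univ

namespace SimpleGraph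

variable {V : Type*} {G : SimpleGraph V}

theorem colorable_sum_of_cover {ι : Type*} [Fintype ι] (S : ι → Set V) (n : ι → ℕ)
    (hcover : ∀ x, ∃ i, x ∈ S i) (hcol : ∀ i, (G.induce (S i)).Colorable (n i)) :
    G.Colorable (∑ i, n i) := by
  choose part hpart using hcover
  let c i := (hcol i).some
  let f : V → Σ i, Fin (n i) := fun x => ⟨part x, c (part x) ⟨x, hpart x⟩⟩
  have hvalid : ∀ {x y}, G.Adj x y → f x ≠ f y := by
    intro x y hxy
    -- with the indices generalized, `Sigma.mk.inj_iff` can substitute `i = j`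
    suffices ∀ i j (hx : x ∈ S i) (hy : y ∈ S j),
        (⟨i, c i ⟨x, hx⟩⟩ : Σ i, Fin (n i)) ≠ ⟨j, c j ⟨y, hy⟩⟩ from this _ _ _ _
    rintro i j hx hy h
    obtain ⟨rfl, hc⟩ := Sigma.mk.inj_iff.mp h
    exact (c i).valid (G.induce_adj.mpr hxy) (eq_of_heq hc)
  simpa using (Coloring.mk _ hvalid).colorable

theorem colorable_one_induce_of_isIndepSet {s : Set V} (hs : G.IsIndepSet s) :
    (G.induce s).Colorable 1 :=
  ⟨Coloring.mk (fun _ => 0) fun {x y} hxy _ => hs x.2 y.2 (fun h => hxy.ne (Subtype.ext h)) hxy⟩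

theorem IsClique.card_add_one_le_cliqueNum [Finite V] {s : Finset V}
    (hs : G.IsClique (s : Set V)) {x : V} (hx : ∀ w ∈ s, G.Adj w x) :
    s.card + 1 ≤ G.cliqueNum := by
  have hxs : x ∉ s := fun h => G.irrefl (hx x h)
  have hclique : G.IsClique (s.cons x hxs : Set V) := by
    rw [Finset.coe_cons]
    exact hs.insert fun w hw _ => (hx w hw).symm
  simpa using hclique.card_le_cliqueNum

/-- The vertices whose only non-neighbour in `K` is `u`; for `u ∈ K` this includes `u` itself. -/
def nonAdjOnly (G : SimpleGraph V) (K : Finset V) (u : V) : Set V :=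
  {x | ∀ w ∈ K, G.Adj w x ↔ w ≠ u}

theorem isIndepSet_nonAdjOnly [Finite V] {K : Finset V} (hK : G.IsNClique G.cliqueNum K)
    {u : V} (hu : u ∈ K) : G.IsIndepSet (G.nonAdjOnly K u) := by
  classical
  intro x hx y hy _ hxy
  have hadj {z} (hz : z ∈ G.nonAdjOnly K u) (w) (hw : w ∈ K.erase u) : G.Adj w z :=
    (hz w (Finset.mem_of_mem_erase hw)).mpr (Finset.ne_of_mem_erase hw)
  have hyK : y ∉ K.erase u := fun h => G.irrefl (hadj hy y h)
  have hclique : G.IsClique (insert y (K.erase u) : Finset V) := by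
    rw [Finset.coe_insert]
    exact (hK.isClique.subset (K.erase_subset u)).insert fun w hw _ => (hadj hy w hw).symm
  have := hclique.card_add_one_le_cliqueNum (x := x) <| by
    simpa [hxy.symm] using hadj hx
  rw [Finset.card_insert_of_notMem hyK, Finset.card_erase_add_one hu, hK.card_eq] at this
  omega

theorem exists_mem_nonAdjOnly [Finite V] {K : Finset V} (hK : G.IsNClique G.cliqueNum K) {x : V}
    (hx : ∀ u ∈ K, ∀ v ∈ K, u ≠ v → G.Adj u x ∨ G.Adj v x) :
    ∃ u ∈ K, x ∈ G.nonAdjOnly K u := by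
  obtain ⟨u, hu, hux⟩ : ∃ u ∈ K, ¬ G.Adj u x := by
    by_contra! h
    have := hK.isClique.card_add_one_le_cliqueNum h
    rw [hK.card_eq] at this
    omega
  refine ⟨u, hu, fun w hw => ⟨?_, fun hwu => (hx u hu w hw hwu.symm).resolve_left hux⟩⟩
  rintro hwx rfl
  exact hux hwx

theorem colorable_of_forall_isPerfect_induce_nonAdj [Finite V]
    (hA : ∀ u v, G.Adj u v → IsPerfect (G.induce {x | ¬ G.Adj u x ∧ ¬ G.Adj v x})) :
    G.Colorable (G.cliqueNum + G.cliqueNum.choose 2 * G.cliqueNum) := by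
  classical
  obtain ⟨K, hK⟩ := G.exists_isNClique_cliqueNum
  let S : K ⊕ {e : Sym2 K // ¬ e.IsDiag} → Set V :=
    Sum.elim (fun u => G.nonAdjOnly K u) (fun e => {x | ∀ u ∈ e.1, ¬ G.Adj u x})
  have hS (a b : K) (he : ¬ s(a, b).IsDiag) :
      S (.inr ⟨s(a, b), he⟩) = {x | ¬ G.Adj a x ∧ ¬ G.Adj b x} := by
    ext x
    simp only [S, Sum.elim_inr, Set.mem_ofPred_eq, Sym2.mem_iff, forall_eq_or_imp, forall_eq]
  have hcover : ∀ x, ∃ i, x ∈ S i := by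
    intro x
    by_contra! h
    obtain ⟨u, hu, hx⟩ := exists_mem_nonAdjOnly hK (x := x) fun u hu v hv huv => by
      by_contra! hx
      have he : ¬ s((⟨u, hu⟩ : K), ⟨v, hv⟩).IsDiag := by simpa using huv
      exact h (.inr ⟨_, he⟩) (hS _ _ he ▸ hx)
    exact h (.inl ⟨u, hu⟩) hx
  let n : K ⊕ {e : Sym2 K // ¬ e.IsDiag} → ℕ := Sum.elim (fun _ => 1) (fun _ => G.cliqueNum)
  have hcol : ∀ i, (G.induce (S i)).Colorable (n i) := by
    rintro (u | ⟨e, he⟩)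
    · exact colorable_one_induce_of_isIndepSet (isIndepSet_nonAdjOnly hK u.2)
    induction e using Sym2.ind with
    | h a b =>
      have hab : G.Adj a b :=
        hK.isClique a.2 b.2 fun h => he (Sym2.mk_isDiag_iff.mpr (Subtype.ext h))
      rw [hS]
      exact (hA a b hab).colorable_cliqueNum.mono (G.cliqueNum_induce_le _)
  have := colorable_sum_of_cover S n hcover hcol
  simpa only [n, Fintype.sum_sum_type, Sum.elim_inl, Sum.elim_inr, Finset.sum_const,
    Finset.card_univ, Sym2.card_subtype_not_diag, Fintype.card_coe, hK.card_eq, smul_eq_mul,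
    mul_one] using this

end SimpleGraph

/-- If for every edge `uv` of `G` the set of vertices adjacent to
neither `u` nor `v` induces a perfect subgraph, then
`χ(G) ≤ (ω(G)³ − ω(G)² + 2ω(G))/2`. -/
theorem stmt14 {V : Type*} [Fintype V] (G : SimpleGraph V)
    (hA : ∀ u v : V, G.Adj u v →
      IsPerfect (G.induce {x | ¬ G.Adj u x ∧ ¬ G.Adj v x})) :
    G.chromaticNumber ≤
      (((G.cliqueNum ^ 3 - G.cliqueNum ^ 2 + 2 * G.cliqueNum) / 2 : ℕ) : ℕ∞) := by
  rw [chromaticNumber_le_iff_colorable, ← Nat.add_choose_two_mul_eq]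
  exact colorable_of_forall_isPerfect_induce_nonAdj hA
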